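/- Consider the optimization S(P_T) = max over beamforming vectors (ω_1,…,ω_K) subject to Σ_k ‖ω_k‖² ≤ P_T of min_k SINR_k, where SINR_k = |ω_k^H h_k|² / (Σ_{i≠k} |ω_i^H h_k|² + σ_k²) with all σ_k > 0 and all h_k ≠ 0. Then at any optimal solution, all K SINR values are equal. -/
import Mathlib
set_option maxHeartbeats 1000000


open scoped InnerProductSpace

/-- SINR of user `k`: `|ω_k^H h_k|² / (Σ_{i≠k} |ω_i^H h_k|² + σ_k²)` (in Mathlib's convention
`⟪x, y⟫_ℂ = x^H y`). -/
noncomputable def SINR {K N : ℕ} (h : Fin K → EuclideanSpace ℂ (Fin N)) (σ : Fin K → ℝ)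
    (ω : Fin K → EuclideanSpace ℂ (Fin N)) (k : Fin K) : ℝ :=
  ‖⟪ω k, h k⟫_ℂ‖ ^ 2 /
    ((∑ i ∈ Finset.univ.erase k, ‖⟪ω i, h k⟫_ℂ‖ ^ 2) + σ k ^ 2)

private lemma inner_real_smul_sq {N : ℕ} (r : ℝ) (x y : EuclideanSpace ℂ (Fin N)) :
    ‖⟪((r : ℝ) : ℂ) • x, y⟫_ℂ‖ ^ 2 = r ^ 2 * ‖⟪x, y⟫_ℂ‖ ^ 2 := by
  rw [inner_smul_left]
  simp [norm_mul, RCLike.norm_conj, Complex.norm_real, Real.norm_eq_abs, mul_pow, sq_abs]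

private lemma norm_real_smul_sq {N : ℕ} (r : ℝ) (x : EuclideanSpace ℂ (Fin N)) :
    ‖((r : ℝ) : ℂ) • x‖ ^ 2 = r ^ 2 * ‖x‖ ^ 2 := by
  rw [norm_smul]
  simp [Complex.norm_real, Real.norm_eq_abs, mul_pow, sq_abs]


private lemma aux1 (ε X g : ℝ) (hε0 : 0 < ε) (hX : 0 < X)
    (h1 : ε * (4 * X + 1) ≤ g) : 2 * ε * X < g := by
  nlinarith [mul_pos hε0 hX]

private lemma aux2 (ε c : ℝ) (hε0 : 0 < ε) (hεh : ε ≤ 1 / 2) (hc : 0 < c) :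
    1 < 1 + (2 * ε - ε ^ 2) * c := by
  nlinarith [mul_pos (mul_pos hε0 (by linarith : (0:ℝ) < 2 - ε)) hc]

private lemma aux3 (ε c : ℝ) (hε0 : 0 < ε) (hεh : ε ≤ 1 / 2) (hc : 0 < c) :
    (1 - ε) ^ 2 ≤ 1 + (2 * ε - ε ^ 2) * c := by
  nlinarith [mul_pos (mul_pos hε0 (by linarith : (0:ℝ) < 2 - ε)) hc]

private lemma aux_keyj (m ε c Nj Sj σ2 : ℝ) (hm : 0 < m) (hε0 : 0 < ε)
    (hc : 0 < c) (hSj : 0 ≤ Sj) (hNj : 0 < Nj)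
    (hεX : 2 * ε * (Nj + c * m * Sj) < Nj - m * (Sj + σ2)) :
    m * ((1 + (2 * ε - ε ^ 2) * c) * Sj + σ2) < (1 - ε) ^ 2 * Nj := by
  nlinarith [mul_nonneg (sq_nonneg ε) hNj.le,
    mul_nonneg (sq_nonneg ε) (mul_nonneg (mul_nonneg hc.le hm.le) hSj)]

private lemma aux_keyk (m τ Nk Sk σ2 : ℝ) (hm : 0 < m) (hτ : 1 < τ)
    (hσ2 : 0 < σ2) (hSk : 0 ≤ Sk) (hmk : m * (Sk + σ2) ≤ Nk) :
    m * (τ * Sk + σ2) < τ * Nk := by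
  nlinarith [mul_le_mul_of_nonneg_left hmk (by linarith : (0:ℝ) ≤ τ),
    mul_pos (sub_pos.mpr hτ) (mul_pos hm hσ2)]

/-- At any optimal solution of the max-min-SINR problem under the total power constraint
`Σ_k ‖ω_k‖² ≤ P_T`, all `K` SINR values are equal. -/
theorem stmt6 {K N : ℕ} (h : Fin (K + 1) → EuclideanSpace ℂ (Fin N))
    (σ : Fin (K + 1) → ℝ) (hσ : ∀ k, 0 < σ k) (hh : ∀ k, h k ≠ 0)
    (P_T : ℝ) (hPT : 0 < P_T)
    (ω : Fin (K + 1) → EuclideanSpace ℂ (Fin N))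
    (hfeas : ∑ k, ‖ω k‖ ^ 2 ≤ P_T)
    (hopt : ∀ ω' : Fin (K + 1) → EuclideanSpace ℂ (Fin N), (∑ k, ‖ω' k‖ ^ 2 ≤ P_T) →
      Finset.univ.inf' Finset.univ_nonempty (SINR h σ ω') ≤
        Finset.univ.inf' Finset.univ_nonempty (SINR h σ ω)) :
    ∀ j k : Fin (K + 1), SINR h σ ω j = SINR h σ ω k := by
  set m := Finset.univ.inf' Finset.univ_nonempty (SINR h σ ω) with hmdef
  have hDpos : ∀ k, 0 < (∑ i ∈ Finset.univ.erase k, ‖⟪ω i, h k⟫_ℂ‖ ^ 2) + σ k ^ 2 := by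
    intro k
    have h1 : 0 ≤ ∑ i ∈ Finset.univ.erase k, ‖⟪ω i, h k⟫_ℂ‖ ^ 2 :=
      Finset.sum_nonneg fun i _ => sq_nonneg _
    have h2 := pow_pos (hσ k) 2
    linarith
  have hm_le : ∀ k, m ≤ SINR h σ ω k := fun k => Finset.inf'_le _ (Finset.mem_univ k)
  -- Step 1 : m > 0
  have hHsum : 0 < ∑ k, ‖h k‖ ^ 2 := by
    have h0 : 0 < ‖h 0‖ ^ 2 := pow_pos (norm_pos_iff.mpr (hh 0)) 2
    exact lt_of_lt_of_le h0
      (Finset.single_le_sum (fun i _ => sq_nonneg ‖h i‖) (Finset.mem_univ 0))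
  have hmpos : 0 < m := by
    set c := Real.sqrt (P_T / ∑ k, ‖h k‖ ^ 2) with hcdef
    have hc : 0 < c := Real.sqrt_pos.mpr (div_pos hPT hHsum)
    have hc2 : c ^ 2 = P_T / ∑ k, ‖h k‖ ^ 2 :=
      Real.sq_sqrt (le_of_lt (div_pos hPT hHsum))
    set ω₀ : Fin (K + 1) → EuclideanSpace ℂ (Fin N) := fun k => ((c : ℝ) : ℂ) • h k with hω₀def
    have hpow : ∑ k, ‖ω₀ k‖ ^ 2 ≤ P_T := by
      have : ∑ k, ‖ω₀ k‖ ^ 2 = c ^ 2 * ∑ k, ‖h k‖ ^ 2 := by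
        rw [Finset.mul_sum]
        exact Finset.sum_congr rfl fun k _ => norm_real_smul_sq c (h k)
      rw [this, hc2, div_mul_cancel₀]
      exact ne_of_gt hHsum
    have hlt : 0 < Finset.univ.inf' Finset.univ_nonempty (SINR h σ ω₀) := by
      rw [Finset.lt_inf'_iff]
      intro k _
      unfold SINR
      apply div_pos
      · have hne : ⟪ω₀ k, h k⟫_ℂ ≠ 0 := by
          rw [hω₀def]
          simp only [inner_smul_left]
          apply mul_ne_zero
          · simp [Complex.ext_iff, ne_of_gt hc]
          · exact inner_self_ne_zero.mpr (hh k)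
        exact pow_pos (norm_pos_iff.mpr hne) 2
      · have h1 : 0 ≤ ∑ i ∈ Finset.univ.erase k, ‖⟪ω₀ i, h k⟫_ℂ‖ ^ 2 :=
          Finset.sum_nonneg fun i _ => sq_nonneg _
        have h2 := pow_pos (hσ k) 2
        linarith
    exact lt_of_lt_of_le hlt (hopt ω₀ hpow)
  -- numerators are positive
  have hnum : ∀ k, 0 < ‖⟪ω k, h k⟫_ℂ‖ ^ 2 := by
    intro k
    by_contra h2
    push_neg at h2
    have hz : ‖⟪ω k, h k⟫_ℂ‖ ^ 2 = 0 := le_antisymm h2 (sq_nonneg _)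
    have h1 := hm_le k
    unfold SINR at h1
    rw [hz, zero_div] at h1
    exact absurd (lt_of_lt_of_le hmpos h1) (lt_irrefl 0)
  have hωpos : ∀ k, 0 < ‖ω k‖ ^ 2 := by
    intro k
    rcases eq_or_ne (ω k) 0 with h0 | h0
    · exfalso
      have := hnum k
      rw [h0] at this
      simp at this
    · exact pow_pos (norm_pos_iff.mpr h0) 2
  -- main argument
  by_contra hcon
  push_neg at hcon
  obtain ⟨j0, k0, hne⟩ := hcon
  have hj : ∃ j, m < SINR h σ ω j := by
    rcases (hm_le j0).lt_or_eq with h1 | h1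
    · exact ⟨j0, h1⟩
    rcases (hm_le k0).lt_or_eq with h2 | h2
    · exact ⟨k0, h2⟩
    exact absurd (h1.symm.trans h2) hne
  obtain ⟨j, hj⟩ := hj
  -- index realizing the min is different from j
  obtain ⟨k1, _, hk1⟩ := Finset.exists_mem_eq_inf' (Finset.univ_nonempty) (SINR h σ ω)
  have hk1j : k1 ≠ j := by
    intro he
    rw [he] at hk1
    exact absurd hj (by rw [← hmdef] at hk1; rw [← hk1]; exact lt_irrefl _)
  -- abbreviations
  set A := ‖ω j‖ ^ 2 with hAdef
  set B := ∑ i ∈ Finset.univ.erase j, ‖ω i‖ ^ 2 with hBdef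
  have hA : 0 < A := hωpos j
  have hB : 0 < B := by
    refine lt_of_lt_of_le (hωpos k1) ?_
    exact Finset.single_le_sum (fun i _ => sq_nonneg ‖ω i‖)
      (Finset.mem_erase.mpr ⟨hk1j, Finset.mem_univ k1⟩)
  set c := A / B with hcdef
  have hc : 0 < c := div_pos hA hB
  set Nj := ‖⟪ω j, h j⟫_ℂ‖ ^ 2 with hNjdef
  set Sj := ∑ i ∈ Finset.univ.erase j, ‖⟪ω i, h j⟫_ℂ‖ ^ 2 with hSjdef
  have hSj : 0 ≤ Sj := Finset.sum_nonneg fun i _ => sq_nonneg _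
  have hNj : 0 < Nj := hnum j
  have hσj := hσ j
  have hDj : 0 < Sj + σ j ^ 2 := by rw [hSjdef]; exact hDpos j
  have hgap : m * (Sj + σ j ^ 2) < Nj := by
    have := hj
    unfold SINR at this
    exact (lt_div_iff₀ hDj).mp this
  set g := Nj - m * (Sj + σ j ^ 2) with hgdef
  have hg : 0 < g := by rw [hgdef]; linarith
  set X := Nj + c * m * Sj with hXdef
  have hX : 0 < X := by
    have : 0 ≤ c * m * Sj := mul_nonneg (mul_nonneg hc.le hmpos.le) hSj
    rw [hXdef]; linarith
  set ε := min (1 / 2 : ℝ) (g / (4 * X + 1)) with hεdef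
  have hε0 : 0 < ε := lt_min (by norm_num) (div_pos hg (by linarith))
  have hεhalf : ε ≤ 1 / 2 := min_le_left _ _
  have hεX : 2 * ε * X < g := by
    have h1 : ε ≤ g / (4 * X + 1) := min_le_right _ _
    have h2 : ε * (4 * X + 1) ≤ g := (le_div_iff₀ (by linarith)).mp h1
    exact aux1 ε X g hε0 hX h2
  set τ := 1 + (2 * ε - ε ^ 2) * c with hτdef
  have hτ1 : 1 < τ := by rw [hτdef]; exact aux2 ε c hε0 hεhalf hc
  have hτ0 : 0 ≤ τ := by linarith
  set st := Real.sqrt τ with hstdef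
  have hst2 : st ^ 2 = τ := Real.sq_sqrt hτ0
  set ω' : Fin (K + 1) → EuclideanSpace ℂ (Fin N) :=
    fun i => if i = j then ((1 - ε : ℝ) : ℂ) • ω j else ((st : ℝ) : ℂ) • ω i with hω'def
  -- power feasibility
  have hω'j : ω' j = ((1 - ε : ℝ) : ℂ) • ω j := by rw [hω'def]; simp
  have hω'ne : ∀ i, i ≠ j → ω' i = ((st : ℝ) : ℂ) • ω i := by
    intro i hi; rw [hω'def]; simp [hi]
  have hpow' : ∑ k, ‖ω' k‖ ^ 2 ≤ P_T := by
    have hsplit : ∑ k, ‖ω' k‖ ^ 2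
        = ‖ω' j‖ ^ 2 + ∑ i ∈ Finset.univ.erase j, ‖ω' i‖ ^ 2 :=
      (Finset.add_sum_erase _ _ (Finset.mem_univ j)).symm
    have hsplit0 : ∑ k, ‖ω k‖ ^ 2 = A + B :=
      (Finset.add_sum_erase _ _ (Finset.mem_univ j)).symm
    have h1 : ‖ω' j‖ ^ 2 = (1 - ε) ^ 2 * A := by
      rw [hω'j, norm_real_smul_sq]
    have h2 : ∑ i ∈ Finset.univ.erase j, ‖ω' i‖ ^ 2 = τ * B := by
      rw [hBdef, Finset.mul_sum]
      refine Finset.sum_congr rfl fun i hi => ?_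
      rw [hω'ne i (Finset.ne_of_mem_erase hi), norm_real_smul_sq, hst2]
    have hτB : τ * B = B + (2 * ε - ε ^ 2) * A := by
      rw [hτdef, hcdef]
      field_simp
    have : ∑ k, ‖ω' k‖ ^ 2 = A + B := by
      rw [hsplit, h1, h2, hτB]; ring
    rw [this, ← hsplit0]; exact hfeas
  -- all new SINRs strictly exceed m
  have hall : ∀ k, m < SINR h σ ω' k := by
    intro k
    rcases eq_or_ne k j with rfl | hkj
    · -- user j
      have hnum' : ‖⟪ω' k, h k⟫_ℂ‖ ^ 2 = (1 - ε) ^ 2 * Nj := by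
        rw [hω'j, inner_real_smul_sq, hNjdef]
      have hden' : (∑ i ∈ Finset.univ.erase k, ‖⟪ω' i, h k⟫_ℂ‖ ^ 2) = τ * Sj := by
        rw [hSjdef, Finset.mul_sum]
        refine Finset.sum_congr rfl fun i hi => ?_
        rw [hω'ne i (Finset.ne_of_mem_erase hi), inner_real_smul_sq, hst2]
      unfold SINR
      rw [hnum', hden']
      have hDen : 0 < τ * Sj + σ k ^ 2 := by
        have h1 : 0 ≤ τ * Sj := mul_nonneg hτ0 hSj
        have h2 := pow_pos (hσ k) 2
        linarith
      rw [lt_div_iff₀ hDen]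
      have hεX' : 2 * ε * (Nj + c * m * Sj) < Nj - m * (Sj + σ k ^ 2) := by
        rw [hXdef] at hεX; rw [hgdef] at hεX; exact hεX
      have key := aux_keyj m ε c Nj Sj (σ k ^ 2) hmpos hε0 hc hSj hNj hεX'
      rw [hτdef]
      exact key
    · -- user k ≠ j
      set Nk := ‖⟪ω k, h k⟫_ℂ‖ ^ 2 with hNkdef
      set Sk := ∑ i ∈ Finset.univ.erase k, ‖⟪ω i, h k⟫_ℂ‖ ^ 2 with hSkdef
      have hSk : 0 ≤ Sk := Finset.sum_nonneg fun i _ => sq_nonneg _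
      have hNk : 0 < Nk := hnum k
      have hσk := hσ k
      have hnum' : ‖⟪ω' k, h k⟫_ℂ‖ ^ 2 = τ * Nk := by
        rw [hω'ne k hkj, inner_real_smul_sq, hst2, hNkdef]
      have hden' : (∑ i ∈ Finset.univ.erase k, ‖⟪ω' i, h k⟫_ℂ‖ ^ 2) ≤ τ * Sk := by
        rw [hSkdef, Finset.mul_sum]
        refine Finset.sum_le_sum fun i hi => ?_
        rcases eq_or_ne i j with rfl | hij
        · rw [hω'j, inner_real_smul_sq]
          have h1 : (1 - ε) ^ 2 ≤ τ := by
            rw [hτdef]; exact aux3 ε c hε0 hεhalf hc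
          exact mul_le_mul_of_nonneg_right h1 (sq_nonneg _)
        · rw [hω'ne i hij, inner_real_smul_sq, hst2]
      have hDen0 : 0 < (∑ i ∈ Finset.univ.erase k, ‖⟪ω' i, h k⟫_ℂ‖ ^ 2) + σ k ^ 2 := by
        have h1 : 0 ≤ ∑ i ∈ Finset.univ.erase k, ‖⟪ω' i, h k⟫_ℂ‖ ^ 2 :=
          Finset.sum_nonneg fun i _ => sq_nonneg _
        have h2 := pow_pos (hσ k) 2
        linarith
      unfold SINR
      rw [hnum', lt_div_iff₀ hDen0]
      have hmk : m * (Sk + σ k ^ 2) ≤ Nk := by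
        have := hm_le k
        unfold SINR at this
        rw [← hNkdef, ← hSkdef] at this
        have hDk : 0 < Sk + σ k ^ 2 := by rw [hSkdef]; exact hDpos k
        exact (le_div_iff₀ hDk).mp this
      have h1 : m * ((∑ i ∈ Finset.univ.erase k, ‖⟪ω' i, h k⟫_ℂ‖ ^ 2) + σ k ^ 2)
          ≤ m * (τ * Sk + σ k ^ 2) := by
        apply mul_le_mul_of_nonneg_left _ (le_of_lt hmpos)
        linarith
      have h2 : m * (τ * Sk + σ k ^ 2) < τ * Nk :=
        aux_keyk m τ Nk Sk (σ k ^ 2) hmpos hτ1 (pow_pos (hσ k) 2) hSk hmk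
      linarith
  have hlt : m < Finset.univ.inf' Finset.univ_nonempty (SINR h σ ω') := by
    rw [Finset.lt_inf'_iff]
    intro k _
    exact hall k
  exact absurd (hopt ω' hpow') (not_le.mpr hlt)
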